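/- Let V be a category with small coproducts and finite limits. Suppose (i) V is distributive, i.e. for every object Y and small family (x_i)_{i∈I} the canonical morphism ∐_{i∈I}(Y × x_i) → Y × (∐_{i∈I} x_i) is an isomorphism, and (ii) coproducts preserve equalizers: whenever for each i ∈ I the morphism e_i → x_i is an equalizer of a parallel pair x_i ⇉ Y (with common codomain Y), the morphism ∐_{i∈I} e_i → ∐_{i∈I} x_i is an equalizer of the induced parallel pair ∐_{i∈I} x_i ⇉ Y. Then coproducts in V are universal. -/

import Mathlib

open CategoryTheory CategoryTheory.Limits

universe v u

/-- Coproducts are universal: the coproduct of the pullbacks of the coprojections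
along any morphism `f : Y ⟶ ∐ x` maps isomorphically onto `Y`. -/
def UniversalCoproducts (V : Type u) [Category.{v} V] [HasCoproducts.{v} V] : Prop :=
  ∀ ⦃I : Type v⦄ (x : I → V) (Y : V) (f : Y ⟶ ∐ x)
    (y : I → V) (p : ∀ i, y i ⟶ Y) (q : ∀ i, y i ⟶ x i),
    (∀ i, IsPullback (q i) (p i) (Sigma.ι x i) f) → IsIso (Sigma.desc p)

/-- In a category with small coproducts and finite limits, if
(i) the category is distributive (the canonical morphism
`∐ (Y ⨯ x i) ⟶ Y ⨯ ∐ x` is an isomorphism) and (ii) coproducts preserve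
equalizers (the coproduct of equalizers `e i ⟶ x i` of parallel pairs
`x i ⇉ Y` is an equalizer of the induced pair `∐ x ⇉ Y`), then coproducts
are universal. -/
theorem universal_of_distributive_and_equalizer_preserving (V : Type u)
    [Category.{v} V] [HasCoproducts.{v} V] [HasFiniteLimits V]
    (hdist : ∀ ⦃I : Type v⦄ (Y : V) (x : I → V),
      IsIso (Sigma.desc (fun i => Limits.prod.map (𝟙 Y) (Sigma.ι x i)) :
        (∐ fun i => Y ⨯ x i) ⟶ Y ⨯ (∐ x)))
    (heq : ∀ ⦃I : Type v⦄ (x : I → V) (Y : V) (f g : ∀ i, x i ⟶ Y)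
      (e : I → V) (inc : ∀ i, e i ⟶ x i)
      (w : ∀ i, inc i ≫ f i = inc i ≫ g i),
      (∀ i, IsLimit (Fork.ofι (inc i) (w i))) →
      ∀ (w' : Limits.Sigma.map inc ≫ Sigma.desc f =
          Limits.Sigma.map inc ≫ Sigma.desc g),
        Nonempty (IsLimit (Fork.ofι (Limits.Sigma.map inc) w'))) :
    UniversalCoproducts V := by

  intro I x Y f y p q hpb
  classical
  set F : ∀ i, (Y ⨯ x i) ⟶ ∐ x := fun i => Limits.prod.fst ≫ f with hF
  set G : ∀ i, (Y ⨯ x i) ⟶ ∐ x := fun i => Limits.prod.snd ≫ Sigma.ι x i with hG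
  set inc : ∀ i, y i ⟶ Y ⨯ x i := fun i => prod.lift (p i) (q i) with hinc
  have w : ∀ i, inc i ≫ F i = inc i ≫ G i := fun i => by
    simp [hF, hG, hinc, (hpb i).w, Limits.prod.lift_fst, Limits.prod.lift_snd, Limits.prod.lift_fst_assoc, Limits.prod.lift_snd_assoc]
  have hlim : ∀ i, IsLimit (Fork.ofι (inc i) (w i)) := fun i => by
    refine Fork.IsLimit.mk _
      (fun s => (hpb i).lift (Fork.ι s ≫ Limits.prod.snd) (Fork.ι s ≫ Limits.prod.fst) ?_)
      (fun s => ?_) (fun s m hm => ?_)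
    · have := s.condition
      simp only [Fork.ι_ofι, hF, hG] at this ⊢
      simpa [Category.assoc] using this.symm
    · apply Limits.prod.hom_ext <;> simp [hinc, Limits.prod.lift_fst, Limits.prod.lift_snd, Limits.prod.lift_fst_assoc, Limits.prod.lift_snd_assoc]
    · apply (hpb i).hom_ext
      · have := congrArg (· ≫ Limits.prod.snd) hm
        simpa [hinc, Limits.prod.lift_fst, Limits.prod.lift_snd, Limits.prod.lift_fst_assoc, Limits.prod.lift_snd_assoc] using this
      · have := congrArg (· ≫ Limits.prod.fst) hm
        simpa [hinc, Limits.prod.lift_fst, Limits.prod.lift_snd, Limits.prod.lift_fst_assoc, Limits.prod.lift_snd_assoc] using this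
  have w' : Limits.Sigma.map inc ≫ Sigma.desc F = Limits.Sigma.map inc ≫ Sigma.desc G := by
    ext i
    simp [w i]
  obtain ⟨hL⟩ := heq (fun i => Y ⨯ x i) (∐ x) F G y inc w hlim w'
  set d : (∐ fun i => Y ⨯ x i) ⟶ Y ⨯ (∐ x) :=
    Sigma.desc (fun i => Limits.prod.map (𝟙 Y) (Sigma.ι x i)) with hd
  haveI : IsIso d := hdist Y x
  have hdF : Sigma.desc F = d ≫ Limits.prod.fst ≫ f := by
    ext i; simp [hd, hF]
  have hdG : Sigma.desc G = d ≫ Limits.prod.snd := by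
    ext i; simp [hd, hG]
  have wY : (prod.lift (𝟙 Y) f ≫ inv d) ≫ Sigma.desc F
      = (prod.lift (𝟙 Y) f ≫ inv d) ≫ Sigma.desc G := by
    rw [hdF, hdG]
    simp [Limits.prod.lift_fst, Limits.prod.lift_snd, Limits.prod.lift_fst_assoc, Limits.prod.lift_snd_assoc]
  have hYlim : IsLimit (Fork.ofι (prod.lift (𝟙 Y) f ≫ inv d) wY) := by
    refine Fork.IsLimit.mk _
      (fun s => Fork.ι s ≫ d ≫ Limits.prod.fst) (fun s => ?_) (fun s m hm => ?_)
    · have key : (Fork.ι s ≫ d ≫ Limits.prod.fst) ≫ prod.lift (𝟙 Y) f = Fork.ι s ≫ d := by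
        apply Limits.prod.hom_ext
        · simp [Limits.prod.lift_fst, Limits.prod.lift_snd, Limits.prod.lift_fst_assoc, Limits.prod.lift_snd_assoc]
        · have hc := s.condition
          simp only [hdF, hdG, Category.assoc] at hc
          simp [Category.assoc, hc, Limits.prod.lift_fst, Limits.prod.lift_snd, Limits.prod.lift_fst_assoc, Limits.prod.lift_snd_assoc]
      rw [Fork.ι_ofι, ← Category.assoc, key]
      simp
    · rw [Fork.ι_ofι] at hm
      have : m ≫ prod.lift (𝟙 Y) f = Fork.ι s ≫ d := by
        have := congrArg (· ≫ d) hm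
        simpa [Category.assoc] using this
      have := congrArg (· ≫ Limits.prod.fst) this
      simpa [Category.assoc, Limits.prod.lift_fst, Limits.prod.lift_snd, Limits.prod.lift_fst_assoc, Limits.prod.lift_snd_assoc] using this
  have hcomm : Sigma.desc p ≫ prod.lift (𝟙 Y) f ≫ inv d = Limits.Sigma.map inc := by
    have key : Sigma.desc p ≫ prod.lift (𝟙 Y) f = Limits.Sigma.map inc ≫ d := by
      ext i <;> simp [hinc, hd, (hpb i).w, Limits.prod.lift_fst, Limits.prod.lift_snd, Limits.prod.lift_fst_assoc, Limits.prod.lift_snd_assoc]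
    rw [← Category.assoc, key]
    simp
  have hhom : Sigma.desc p = (hL.conePointUniqueUpToIso hYlim).hom := by
    apply Fork.IsLimit.hom_ext hYlim
    rw [Fork.ι_ofι, hcomm]
    have := hL.conePointUniqueUpToIso_hom_comp hYlim WalkingParallelPair.zero
    simpa using this.symm
  rw [hhom]
  infer_instance
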